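/- In a hidden Markov chain model, the entropy of the future partial state sequence satisfies, for every 0 ≤ t ≤ T−2: H(S_t^{T−1} | X = x) = Σ_j P(S_t = j | X = x) { H(S_{t+1}^{T−1} | S_t = j, X_{t+1}^{T−1} = x_{t+1}^{T−1}) − log P(S_t = j | X = x) }, the sum ranging over the states j with P(S_t = j | X = x) > 0. -/

import Mathlib

/-- A hidden Markov chain (HMC) model with `J` states, observation alphabet
`{0, …, V-1}` and sequence length `T`: initial probabilities, transition
probabilities and emission probabilities. -/
structure HMCModel (J V T : ℕ) where
  init : Fin J → ℝ
  trans : Fin J → Fin J → ℝ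
  emit : Fin J → Fin V → ℝ
  init_nonneg : ∀ j, 0 ≤ init j
  init_sum : ∑ j, init j = 1
  trans_nonneg : ∀ i j, 0 ≤ trans i j
  trans_sum : ∀ i, ∑ j, trans i j = 1
  emit_nonneg : ∀ j y, 0 ≤ emit j y
  emit_sum : ∀ j, ∑ y, emit j y = 1

namespace HMCModel

variable {J V T : ℕ} [NeZero J] [NeZero T]

/-- The joint law of the state sequence and the observed sequence:
`P(S = s, X = x) = π_{s_0} b_{s_0}(x_0) ∏_{t=1}^{T-1} p_{s_{t-1} s_t} b_{s_t}(x_t)`. -/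
noncomputable def joint (M : HMCModel J V T) (s : Fin T → Fin J) (x : Fin T → Fin V) : ℝ :=
  M.init (s 0) * M.emit (s 0) (x 0) *
    ∏ t ∈ Finset.univ.filter (fun t : Fin T => t ≠ 0),
      M.trans (s (t - 1)) (s t) * M.emit (s t) (x t)

open Classical in
/-- Probability of an event on (state sequence, observed sequence). -/
noncomputable def pr (M : HMCModel J V T)
    (E : (Fin T → Fin J) → (Fin T → Fin V) → Prop) : ℝ :=
  ∑ s : Fin T → Fin J, ∑ y : Fin T → Fin V, if E s y then M.joint s y else 0

/-- Conditional probability `P(A | B)`; it is `0` when the conditioning event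
has probability zero. -/
noncomputable def cpr (M : HMCModel J V T)
    (A B : (Fin T → Fin J) → (Fin T → Fin V) → Prop) : ℝ :=
  if 0 < M.pr B then M.pr (fun s y => A s y ∧ B s y) / M.pr B else 0

/-- Entropy of the random vector `f(S)` given the event `E`
(natural logarithm, with the convention `0 log 0 = 0`). -/
noncomputable def condEnt (M : HMCModel J V T) {α : Type*} [Fintype α]
    (f : (Fin T → Fin J) → α)
    (E : (Fin T → Fin J) → (Fin T → Fin V) → Prop) : ℝ :=
  -∑ a : α, M.cpr (fun s _ => f s = a) E * Real.log (M.cpr (fun s _ => f s = a) E)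

/-- Entropy of `f(S)` given the random vector `g(S)` and the event `E`:
`H(f(S) | g(S), E) = ∑_c P(g(S) = c | E) H(f(S) | g(S) = c, E)`. -/
noncomputable def condEntGiven (M : HMCModel J V T) {α β : Type*} [Fintype α] [Fintype β]
    (f : (Fin T → Fin J) → α) (g : (Fin T → Fin J) → β)
    (E : (Fin T → Fin J) → (Fin T → Fin V) → Prop) : ℝ :=
  ∑ c : β, M.cpr (fun s _ => g s = c) E * M.condEnt f (fun s y => g s = c ∧ E s y)

/-- The event `X = x`. -/
def obsEq (x : Fin T → Fin V) : (Fin T → Fin J) → (Fin T → Fin V) → Prop :=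
  fun _ y => y = x

/-- The partial state vector `S_0^{t-1}` (coordinates `≥ t` are padded by `0`). -/
def prefixVar (t : ℕ) (s : Fin T → Fin J) : Fin T → Fin J :=
  fun r => if (r : ℕ) < t then s r else 0

/-- The partial state vector `S_t^{T-1}` (coordinates `< t` are padded by `0`). -/
def suffixVar (t : ℕ) (s : Fin T → Fin J) : Fin T → Fin J :=
  fun r => if t ≤ (r : ℕ) then s r else 0

end HMCModel

open HMCModel

/-!
Identify `S_t^{T-1}` with the pair `(S_t, S_{t+1}^{T-1})`: the chain rule splits
`H(S_t^{T-1} | X = x)` into `H(S_t | X = x)` plus the `P(S_t = j | X = x)`-average of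
`H(S_{t+1}^{T-1} | S_t = j, X = x)`. The joint weight is a factor depending only on
`S_0^t, X_0^t` times a factor depending only on `S_t^{T-1}, X_{t+1}^{T-1}`. Hence, once
`S_t = j` is fixed, also conditioning on the past observations only rescales the law of
`S_{t+1}^{T-1}`, so its entropy given `X = x` equals its entropy given the future observations.
-/

open Finset Real

theorem sum_filter_agree_Ioi_eq_of_dependsOn_Iic {ι α β : Type*} [Fintype ι] [DecidableEq ι]
    [LinearOrder ι] [Fintype α] [DecidableEq α] [AddCommMonoid β] (t : ι)
    {F : (ι → α) → β} (hF : DependsOn F (Set.Iic t)) (a b : ι → α) :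
    ∑ s with ∀ r, t < r → s r = a r, F s = ∑ s with ∀ r, t < r → s r = b r, F s := by
  let splice (c : ι → α) (s : ι → α) : ι → α := fun r => if r ≤ t then s r else c r
  refine sum_nbij' (splice b) (splice a) ?_ ?_ ?_ ?_ fun s _ =>
    hF fun r hr => by simp [splice, Set.mem_Iic.mp hr]
  all_goals
    intro s hs
    simp only [mem_filter, mem_univ, true_and] at hs ⊢
  · intro r hr; simp [splice, not_le.mpr hr]
  · intro r hr; simp [splice, not_le.mpr hr]
  all_goals
    ext r
    by_cases hr : r ≤ t
    · simp [splice, hr]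
    · simp [splice, hr, hs r (not_le.mp hr)]

namespace HMCModel

section SuffixVar

variable {J T : ℕ} [NeZero J]

theorem suffixVar_succ_eq_iff (t : Fin T) {s a : Fin T → Fin J} :
    suffixVar (t + 1) s = a ↔ (∀ r ≤ t, a r = 0) ∧ ∀ r, t < r → s r = a r := by
  simp only [funext_iff, suffixVar, Nat.succ_le_iff, ← Fin.lt_def]
  constructor
  · intro h
    refine ⟨fun r hr => ?_, fun r hr => by simpa [hr] using h r⟩
    simpa [not_lt.mpr hr] using (h r).symm
  · rintro ⟨hpast, hfuture⟩ r
    by_cases hr : t < r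
    · simp [hr, hfuture r hr]
    · simp [hr, hpast r (not_lt.mp hr)]

theorem suffixVar_apply_self (t : Fin T) (s : Fin T → Fin J) : suffixVar t s t = s t := by
  simp [suffixVar]

theorem update_suffixVar (t : Fin T) (s : Fin T → Fin J) :
    Function.update (suffixVar t s) t 0 = suffixVar (t + 1) s := by
  funext r
  by_cases hr : r = t
  · simp [hr, suffixVar]
  · have hrt := Fin.val_ne_of_ne hr
    rw [Function.update_of_ne hr]
    simp only [suffixVar]
    split_ifs <;> first | rfl | omega

theorem injective_apply_update (t : Fin T) :
    Function.Injective fun a : Fin T → Fin J => (a t, Function.update a t 0) := by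
  intro a b h
  simp only [Prod.mk.injEq] at h
  funext r
  by_cases hr : r = t
  · rw [hr, h.1]
  · simpa [Function.update_of_ne hr] using congrFun h.2 r

end SuffixVar

variable {J V T : ℕ} [NeZero T] (M : HMCModel J V T)

section Probability

variable {E F : (Fin T → Fin J) → (Fin T → Fin V) → Prop}

theorem joint_nonneg (s : Fin T → Fin J) (y : Fin T → Fin V) : 0 ≤ M.joint s y :=
  mul_nonneg (mul_nonneg (M.init_nonneg _) (M.emit_nonneg _ _)) <|
    prod_nonneg fun _ _ => mul_nonneg (M.trans_nonneg _ _) (M.emit_nonneg _ _)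

theorem pr_nonneg (E : (Fin T → Fin J) → (Fin T → Fin V) → Prop) : 0 ≤ M.pr E :=
  sum_nonneg fun s _ => sum_nonneg fun y _ => by
    split_ifs
    exacts [M.joint_nonneg s y, le_rfl]

theorem pr_mono (h : ∀ s y, E s y → F s y) : M.pr E ≤ M.pr F :=
  sum_le_sum fun s _ => sum_le_sum fun y _ => by
    by_cases hE : E s y
    · simp [hE, h s y hE]
    · simp only [hE, if_false]
      split_ifs
      exacts [M.joint_nonneg s y, le_rfl]

theorem pr_eq_zero (h : ∀ s y, ¬ E s y) : M.pr E = 0 :=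
  sum_eq_zero fun s _ => sum_eq_zero fun y _ => if_neg (h s y)

theorem pr_congr (h : ∀ s y, E s y ↔ F s y) : M.pr E = M.pr F := by
  classical
  exact sum_congr rfl fun s _ => sum_congr rfl fun y _ => if_congr (h s y) rfl rfl

theorem sum_pr_and_eq {α : Type*} [Fintype α] (f : (Fin T → Fin J) → α) :
    ∑ a, M.pr (fun s y => f s = a ∧ E s y) = M.pr E := by
  classical
  unfold pr
  rw [sum_comm]
  refine sum_congr rfl fun s _ => ?_
  rw [sum_comm]
  refine sum_congr rfl fun y _ => ?_
  by_cases hE : E s y <;> simp [hE]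

theorem cpr_nonneg (A E : (Fin T → Fin J) → (Fin T → Fin V) → Prop) : 0 ≤ M.cpr A E := by
  unfold cpr
  split_ifs
  exacts [div_nonneg (M.pr_nonneg _) (M.pr_nonneg _), le_rfl]

theorem pr_and_pos_of_cpr_pos {A : (Fin T → Fin J) → (Fin T → Fin V) → Prop}
    (h : 0 < M.cpr A E) : 0 < M.pr (fun s y => A s y ∧ E s y) := by
  unfold cpr at h
  split_ifs at h with hE
  · exact (div_pos_iff_of_pos_right hE).mp h
  · exact absurd h (lt_irrefl 0)

theorem cpr_and (A B E : (Fin T → Fin J) → (Fin T → Fin V) → Prop) :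
    M.cpr (fun s y => A s y ∧ B s y) E
      = M.cpr B E * M.cpr A (fun s y => B s y ∧ E s y) := by
  have hABE : M.pr (fun s y => (A s y ∧ B s y) ∧ E s y)
      = M.pr (fun s y => A s y ∧ B s y ∧ E s y) := M.pr_congr fun _ _ => and_assoc
  have hsub : M.pr (fun s y => A s y ∧ B s y ∧ E s y) ≤ M.pr (fun s y => B s y ∧ E s y) :=
    M.pr_mono fun _ _ h => h.2
  unfold cpr
  rw [hABE]
  by_cases hE : 0 < M.pr E
  · by_cases hBE : 0 < M.pr (fun s y => B s y ∧ E s y)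
    · rw [if_pos hE, if_pos hE, if_pos hBE]
      field_simp
    · have h0 : M.pr (fun s y => B s y ∧ E s y) = 0 :=
        le_antisymm (not_lt.mp hBE) (M.pr_nonneg _)
      have h0' : M.pr (fun s y => A s y ∧ B s y ∧ E s y) = 0 :=
        le_antisymm (h0 ▸ hsub) (M.pr_nonneg _)
      simp [h0, h0']
  · simp [hE]

theorem sum_cpr_eq_one {α : Type*} [Fintype α] (f : (Fin T → Fin J) → α) (hE : 0 < M.pr E) :
    ∑ a, M.cpr (fun s _ => f s = a) E = 1 := by
  simp only [cpr, if_pos hE, ← sum_div, M.sum_pr_and_eq, div_self hE.ne']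

theorem cpr_eq_div_sum_of_pr_eq_mul {α : Type*} [Fintype α] {f : (Fin T → Fin J) → α}
    {G : α → ℝ} {C : ℝ} (h : ∀ a, M.pr (fun s y => f s = a ∧ E s y) = C * G a)
    (hE : 0 < M.pr E) (a : α) :
    M.cpr (fun s _ => f s = a) E = G a / ∑ b, G b := by
  have hsum : M.pr E = C * ∑ b, G b := by
    rw [← M.sum_pr_and_eq f, mul_sum]
    exact sum_congr rfl fun b _ => h b
  have hC : C ≠ 0 := by
    rintro rfl
    rw [zero_mul] at hsum
    exact hE.ne' hsum
  rw [cpr, if_pos hE, h, hsum, mul_div_mul_left _ _ hC]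

end Probability

section Entropy

variable {α β : Type*} [Fintype α] [Fintype β]
  (E : (Fin T → Fin J) → (Fin T → Fin V) → Prop)

theorem condEnt_eq_sum_negMulLog (f : (Fin T → Fin J) → α) :
    M.condEnt f E = ∑ a, negMulLog (M.cpr (fun s _ => f s = a) E) := by
  simp only [condEnt, negMulLog, neg_mul, sum_neg_distrib]

theorem condEnt_comp_injective {ψ : α → β} (hψ : Function.Injective ψ)
    (f : (Fin T → Fin J) → α) :
    M.condEnt (fun s => ψ (f s)) E = M.condEnt f E := by
  simp only [condEnt_eq_sum_negMulLog]
  refine (Fintype.sum_of_injective ψ hψ _ _ (fun b hb => ?_) fun a => ?_).symm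
  · have hempty : M.pr (fun s y => ψ (f s) = b ∧ E s y) = 0 :=
      M.pr_eq_zero fun s _ h => hb ⟨f s, h.1⟩
    simp [cpr, hempty]
  · simp only [hψ.eq_iff]

theorem condEnt_prod (g : (Fin T → Fin J) → α) (h : (Fin T → Fin J) → β) :
    M.condEnt (fun s => (g s, h s)) E = M.condEnt g E + M.condEntGiven h g E := by
  have hsplit : ∀ c d, M.cpr (fun s _ => (g s, h s) = (c, d)) E
      = M.cpr (fun s _ => g s = c) E
        * M.cpr (fun s _ => h s = d) (fun s y => g s = c ∧ E s y) := by
    intro c d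
    rw [← M.cpr_and]
    simp only [Prod.mk.injEq, and_comm]
  have hnormal : ∀ c, (∑ d, M.cpr (fun s _ => h s = d) (fun s y => g s = c ∧ E s y))
      * negMulLog (M.cpr (fun s _ => g s = c) E) = negMulLog (M.cpr (fun s _ => g s = c) E) := by
    intro c
    rcases (M.cpr_nonneg (fun s _ => g s = c) E).eq_or_lt with h0 | hpos
    · simp [← h0]
    · rw [M.sum_cpr_eq_one h (M.pr_and_pos_of_cpr_pos hpos), one_mul]
  simp only [condEnt_eq_sum_negMulLog, condEntGiven, Fintype.sum_prod_type, hsplit,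
    negMulLog_mul, sum_add_distrib, ← sum_mul, ← mul_sum, hnormal]

end Entropy

section Weights

noncomputable def pastWeight (t : Fin T) (s : Fin T → Fin J) (y : Fin T → Fin V) : ℝ :=
  M.init (s 0) * M.emit (s 0) (y 0) *
    ∏ r with r ≠ 0 ∧ r ≤ t, M.trans (s (r - 1)) (s r) * M.emit (s r) (y r)

noncomputable def futureWeight (t : Fin T) (s : Fin T → Fin J) (y : Fin T → Fin V) : ℝ :=
  ∏ r with t < r, M.trans (s (r - 1)) (s r) * M.emit (s r) (y r)

theorem joint_eq_pastWeight_mul_futureWeight (t : Fin T) (s : Fin T → Fin J)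
    (y : Fin T → Fin V) : M.joint s y = M.pastWeight t s y * M.futureWeight t s y := by
  have hfuture : univ.filter (fun r : Fin T => r ≠ 0 ∧ ¬ r ≤ t) = univ.filter (t < ·) := by
    ext r
    simp only [mem_filter, mem_univ, true_and, not_le]
    exact ⟨And.right, fun h => ⟨ne_zero_of_lt h, h⟩⟩
  rw [joint, pastWeight, futureWeight, mul_assoc _ (∏ r with r ≠ 0 ∧ r ≤ t, _),
    ← prod_filter_mul_prod_filter_not (univ.filter (· ≠ 0)) (· ≤ t), filter_filter,
    filter_filter, hfuture]

variable {t : Fin T} {s s' : Fin T → Fin J} {y y' : Fin T → Fin V}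

theorem pastWeight_congr (hs : ∀ r ≤ t, s r = s' r) (hy : ∀ r ≤ t, y r = y' r) :
    M.pastWeight t s y = M.pastWeight t s' y' := by
  have h0 : (0 : Fin T) ≤ t := Fin.zero_le t
  rw [pastWeight, pastWeight, hs 0 h0, hy 0 h0]
  refine congrArg _ (prod_congr rfl fun r hr => ?_)
  obtain ⟨hr0, hrt⟩ := (mem_filter.mp hr).2
  have hpred : r - 1 ≤ t := by
    rw [Fin.le_def, Fin.val_sub_one_of_ne_zero hr0]
    exact (Nat.sub_le _ _).trans hrt
  rw [hs _ hpred, hs r hrt, hy r hrt]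

theorem futureWeight_congr (hs : ∀ r, t ≤ r → s r = s' r) (hy : ∀ r, t < r → y r = y' r) :
    M.futureWeight t s y = M.futureWeight t s' y' := by
  refine prod_congr rfl fun r hr => ?_
  have htr : t < r := (mem_filter.mp hr).2
  have hpred : t ≤ r - 1 := by
    rw [Fin.le_def, Fin.val_sub_one_of_ne_zero (ne_zero_of_lt htr)]
    exact Nat.le_sub_one_of_lt htr
  rw [hs _ hpred, hs r htr.le, hy r htr]

end Weights

open Classical in
theorem exists_pr_suffixVar_eq_mul [NeZero J] (x : Fin T → Fin V) (t : Fin T) (j : Fin J)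
    {Q : (Fin T → Fin V) → Prop} (hQ : ∀ y, Q y → ∀ r, t < r → y r = x r) :
    ∃ C, ∀ a, M.pr (fun s y => suffixVar (t + 1) s = a ∧ s t = j ∧ Q y)
      = C * if ∀ r ≤ t, a r = 0 then M.futureWeight t (Function.update a t j) x else 0 := by
  let pastMass (s : Fin T → Fin J) : ℝ :=
    if s t = j then ∑ y with Q y, M.pastWeight t s y else 0
  refine ⟨∑ s with ∀ r, t < r → s r = 0, pastMass s, fun a => ?_⟩
  by_cases ha : ∀ r ≤ t, a r = 0
  swap
  · rw [if_neg ha, mul_zero]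
    exact M.pr_eq_zero fun s y h => ha ((suffixVar_succ_eq_iff t).mp h.1).1
  rw [if_pos ha]
  set G := M.futureWeight t (Function.update a t j) x
  have hdep : DependsOn pastMass (Set.Iic t) := fun s s' h => by
    simp only [pastMass, h t (Set.mem_Iic.mpr le_rfl),
      M.pastWeight_congr (s' := s') (y' := _) (fun r hr => h r hr) fun _ _ => rfl]
  have hrow : ∀ s, (∑ y, if suffixVar (t + 1) s = a ∧ s t = j ∧ Q y then M.joint s y else 0)
      = (if ∀ r, t < r → s r = a r then pastMass s else 0) * G := by
    intro s
    by_cases hs : ∀ r, t < r → s r = a r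
    swap
    · have hsV : suffixVar (t + 1) s ≠ a := fun h => hs ((suffixVar_succ_eq_iff t).mp h).2
      simp [hs, hsV]
    have hsV : suffixVar (t + 1) s = a := (suffixVar_succ_eq_iff t).mpr ⟨ha, hs⟩
    by_cases hj : s t = j
    swap
    · simp [hsV, hj, pastMass]
    have hupdate : ∀ r, t ≤ r → s r = Function.update a t j r := by
      intro r hr
      rcases hr.eq_or_lt with rfl | hr
      · simp [hj]
      · simp [hs r hr, hr.ne']
    have hG : ∀ y, Q y → M.futureWeight t s y = G := fun y hy =>
      M.futureWeight_congr hupdate (hQ y hy)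
    rw [if_pos hs]
    simp only [hsV, hj, pastMass, true_and, if_true, sum_filter, sum_mul]
    refine sum_congr rfl fun y _ => ?_
    by_cases hy : Q y
    · simp [hy, M.joint_eq_pastWeight_mul_futureWeight t, hG y hy]
    · simp [hy]
  calc M.pr (fun s y => suffixVar (t + 1) s = a ∧ s t = j ∧ Q y)
      = ∑ s, (if ∀ r, t < r → s r = a r then pastMass s else 0) * G :=
        sum_congr rfl fun s _ => by convert hrow s
    _ = (∑ s with ∀ r, t < r → s r = a r, pastMass s) * G := by rw [sum_filter, sum_mul]
    _ = _ := by
      convert congrArg (· * G) (sum_filter_agree_Ioi_eq_of_dependsOn_Iic t hdep a fun _ => 0)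

theorem condEnt_suffixVar_succ_obsEq [NeZero J] (x : Fin T → Fin V) (t : Fin T) (j : Fin J)
    (h : 0 < M.pr (fun s y => s t = j ∧ obsEq x s y)) :
    M.condEnt (suffixVar (t + 1)) (fun s y => s t = j ∧ obsEq x s y)
      = M.condEnt (suffixVar (t + 1)) (fun s y => s t = j ∧ ∀ r, t < r → y r = x r) := by
  obtain ⟨C, hC⟩ :=
    M.exists_pr_suffixVar_eq_mul x t j (Q := (· = x)) fun _ hy _ _ => hy ▸ rfl
  obtain ⟨C', hC'⟩ := M.exists_pr_suffixVar_eq_mul x t j fun _ hy => hy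
  have h' : 0 < M.pr (fun s y => s t = j ∧ ∀ r, t < r → y r = x r) :=
    h.trans_le <| M.pr_mono fun _ _ ⟨hj, hy⟩ => ⟨hj, fun _ _ => by rw [hy]⟩
  simp only [condEnt_eq_sum_negMulLog,
    M.cpr_eq_div_sum_of_pr_eq_mul (E := fun s y => s t = j ∧ obsEq x s y) hC h,
    M.cpr_eq_div_sum_of_pr_eq_mul hC' h']

theorem condEnt_suffixVar_eq_condEnt_add_condEntGiven [NeZero J] (t : Fin T)
    (E : (Fin T → Fin J) → (Fin T → Fin V) → Prop) :
    M.condEnt (suffixVar t) E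
      = M.condEnt (· t) E + M.condEntGiven (suffixVar (t + 1)) (· t) E := by
  rw [← condEnt_prod, ← M.condEnt_comp_injective E (injective_apply_update t)]
  simp only [suffixVar_apply_self, update_suffixVar]

end HMCModel

theorem hmc_future_partial_entropy_general
    {J V T : ℕ} [NeZero J] [NeZero T] (M : HMCModel J V T)
    (x : Fin T → Fin V) (t : Fin T)
    (L : Fin J → ℝ) (hL : ∀ j, L j = M.cpr (fun s _ => s t = j) (obsEq x)) :
    M.condEnt (suffixVar (t : ℕ)) (obsEq x)
      = ∑ j ∈ Finset.univ.filter (fun j : Fin J => 0 < L j),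
          L j * (M.condEnt (suffixVar ((t : ℕ) + 1))
                    (fun s y => s t = j ∧ ∀ r : Fin T, t < r → y r = x r)
                 - Real.log (L j)) := by
  have hL_nonneg : ∀ j, 0 ≤ L j := fun j => hL j ▸ M.cpr_nonneg _ _
  rw [M.condEnt_suffixVar_eq_condEnt_add_condEntGiven, condEnt_eq_sum_negMulLog, condEntGiven,
    ← sum_add_distrib,
    ← sum_filter_of_ne fun j _ hj => (hL_nonneg j).lt_of_ne' fun h0 => hj (by simp [← hL, h0])]
  refine sum_congr rfl fun j hj => ?_
  have hpos : 0 < M.pr (fun s y => s t = j ∧ obsEq x s y) :=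
    M.pr_and_pos_of_cpr_pos (hL j ▸ (mem_filter.mp hj).2)
  rw [← hL, M.condEnt_suffixVar_succ_obsEq x t j hpos, Real.negMulLog]
  ring

/-- In a hidden Markov chain model, the entropy of the future
partial state sequence satisfies, for every `0 ≤ t ≤ T-2`:
`H(S_t^{T-1} | X = x) = ∑_j P(S_t = j | X = x)
   { H(S_{t+1}^{T-1} | S_t = j, X_{t+1}^{T-1} = x_{t+1}^{T-1}) − log P(S_t = j | X = x) }`,
the sum ranging over the states `j` with `P(S_t = j | X = x) > 0`. -/
theorem hmc_future_partial_entropy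
    {J V T : ℕ} [NeZero J] [NeZero T] (M : HMCModel J V T)
    (x : Fin T → Fin V) (hx : 0 < M.pr (obsEq x))
    (t : Fin T) (ht : (t : ℕ) < T - 1)
    (L : Fin J → ℝ) (hL : ∀ j, L j = M.cpr (fun s _ => s t = j) (obsEq x)) :
    M.condEnt (suffixVar (t : ℕ)) (obsEq x)
      = ∑ j ∈ Finset.univ.filter (fun j : Fin J => 0 < L j),
          L j * (M.condEnt (suffixVar ((t : ℕ) + 1))
                    (fun s y => s t = j ∧ ∀ r : Fin T, t < r → y r = x r)
                 - Real.log (L j)) :=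
  hmc_future_partial_entropy_general M x t L hL
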